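/- Let m ≥ 1, let z_0 ∈ ℂ be arbitrary, and let b ∈ ℂ with |b| ≤ 1. Then for all λ_1,…,λ_m ≥ 0, all skew-symmetric complex m×m matrices B_{20}, B_{02}, and all t ≥ 0, one has Φ(Λ, B_{20}, B_{02}, t) ≤ m(|z_0|² - 1). -/

import Mathlib

open Matrix

/-- Squared Frobenius norm of a complex matrix. -/
noncomputable def frobSq {m : ℕ} (B : Matrix (Fin m) (Fin m) ℂ) : ℝ :=
  ∑ i, ∑ j, ‖B i j‖ ^ 2

/-- The `4m × 4m` block matrix `F̃(Λ, B₂₀, B₀₂)` with block rows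
`(b·B₂₀, 0, -z₀·I, Λ)`, `(0, b·B₀₂ᴴ, -Λ, -conj(z₀)·I)`, `(z₀·I, Λ, conj(b)·B₂₀ᴴ, 0)`,
`(-Λ, conj(z₀)·I, 0, conj(b)·B₀₂)`, where `Λ = diag(λ₁,…,λ_m)`. -/
noncomputable def Ftilde (m : ℕ) (z₀ b : ℂ) (lam : Fin m → ℝ)
    (B20 B02 : Matrix (Fin m) (Fin m) ℂ) :
    Matrix ((Fin m ⊕ Fin m) ⊕ (Fin m ⊕ Fin m)) ((Fin m ⊕ Fin m) ⊕ (Fin m ⊕ Fin m)) ℂ :=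
  let Λ : Matrix (Fin m) (Fin m) ℂ := Matrix.diagonal fun j => (lam j : ℂ)
  Matrix.fromBlocks
    (Matrix.fromBlocks (b • B20) 0 0 (b • B02ᴴ))
    (Matrix.fromBlocks (-(z₀ • (1 : Matrix (Fin m) (Fin m) ℂ))) Λ
      (-Λ) (-((starRingEnd ℂ) z₀ • (1 : Matrix (Fin m) (Fin m) ℂ))))
    (Matrix.fromBlocks (z₀ • (1 : Matrix (Fin m) (Fin m) ℂ)) Λ
      (-Λ) ((starRingEnd ℂ) z₀ • (1 : Matrix (Fin m) (Fin m) ℂ)))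
    (Matrix.fromBlocks ((starRingEnd ℂ) b • B20ᴴ) 0 0 ((starRingEnd ℂ) b • B02))

/-- The phase function
`Φ(Λ,B₂₀,B₀₂,t) = -Σ_j λ_j² - (‖B₂₀‖² + ‖B₀₂‖²)/2 - t + (1/2)·log|det F̃|`,
with value `⊥ = -∞` when `det F̃ = 0`. -/
noncomputable def PhiFn (m : ℕ) (z₀ b : ℂ) (lam : Fin m → ℝ)
    (B20 B02 : Matrix (Fin m) (Fin m) ℂ) (t : ℝ) : EReal :=
  if (Ftilde m z₀ b lam B20 B02).det = 0 then ⊥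
  else ((-∑ j, lam j ^ 2 - (frobSq B20 + frobSq B02) / 2 - t
    + (1 / 2) * Real.log ‖(Ftilde m z₀ b lam B20 B02).det‖ : ℝ) : EReal)

/-
Applying `log x ≤ x - 1` to the eigenvalues of the positive definite matrix `F̃ᴴ F̃` gives
`2 log |det F̃| = log det (F̃ᴴ F̃) ≤ tr (F̃ᴴ F̃) - 4m = ‖F̃‖² - 4m`.
Counting blocks, `‖F̃‖² = 4 ∑ λⱼ² + 4m |z₀|² + 2 |b|² (‖B₂₀‖² + ‖B₀₂‖²)`,
so the Gaussian weights in `Φ` absorb every term except `m (|z₀|² - 1)`,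
with a loss of `(1 - |b|²)(‖B₂₀‖² + ‖B₀₂‖²)/2 + t ≥ 0`.
-/

namespace Matrix

section FrobNormSq

variable {α β γ δ : Type*} [Fintype α] [Fintype β] [Fintype γ] [Fintype δ]

noncomputable def frobNormSq (A : Matrix α β ℂ) : ℝ :=
  ∑ i, ∑ j, ‖A i j‖ ^ 2

lemma frobNormSq_nonneg (A : Matrix α β ℂ) : 0 ≤ frobNormSq A := by
  unfold frobNormSq; positivity

lemma frobNormSq_fromBlocks (A : Matrix α γ ℂ) (B : Matrix α δ ℂ) (C : Matrix β γ ℂ)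
    (D : Matrix β δ ℂ) :
    frobNormSq (fromBlocks A B C D) =
      frobNormSq A + frobNormSq B + frobNormSq C + frobNormSq D := by
  simp only [frobNormSq, Fintype.sum_sum_type, fromBlocks_apply₁₁, fromBlocks_apply₁₂,
    fromBlocks_apply₂₁, fromBlocks_apply₂₂, Finset.sum_add_distrib]
  ring

lemma frobNormSq_smul (c : ℂ) (A : Matrix α β ℂ) :
    frobNormSq (c • A) = ‖c‖ ^ 2 * frobNormSq A := by
  simp [frobNormSq, mul_pow, Finset.mul_sum]

@[simp]
lemma frobNormSq_neg (A : Matrix α β ℂ) : frobNormSq (-A) = frobNormSq A := by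
  simp [frobNormSq]

@[simp]
lemma frobNormSq_conjTranspose (A : Matrix α β ℂ) : frobNormSq Aᴴ = frobNormSq A := by
  rw [frobNormSq, Finset.sum_comm]
  simp [frobNormSq]

@[simp]
lemma frobNormSq_zero : frobNormSq (0 : Matrix α β ℂ) = 0 := by
  simp [frobNormSq]

lemma frobNormSq_diagonal [DecidableEq α] (d : α → ℂ) :
    frobNormSq (diagonal d) = ∑ i, ‖d i‖ ^ 2 := by
  simp [frobNormSq, diagonal_apply, apply_ite (‖·‖ ^ 2)]

@[simp]
lemma frobNormSq_one [DecidableEq α] : frobNormSq (1 : Matrix α α ℂ) = Fintype.card α := by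
  simp [← diagonal_one, frobNormSq_diagonal]

lemma trace_conjTranspose_mul_self_eq_frobNormSq (A : Matrix α β ℂ) :
    (Aᴴ * A).trace = frobNormSq A := by
  simp only [trace, diag_apply, mul_apply, conjTranspose_apply, frobNormSq]
  rw [Finset.sum_comm]
  push_cast
  simp only [RCLike.star_def, Complex.conj_mul']

end FrobNormSq

open scoped ComplexOrder

lemma PosDef.log_det_le_trace_sub_card {n 𝕜 : Type*} [Fintype n] [DecidableEq n] [RCLike 𝕜]
    {A : Matrix n n 𝕜} (hA : A.PosDef) :
    Real.log (RCLike.re A.det) ≤ RCLike.re A.trace - Fintype.card n := by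
  have hpos := hA.eigenvalues_pos
  rw [hA.isHermitian.det_eq_prod_eigenvalues, hA.isHermitian.trace_eq_sum_eigenvalues,
    ← RCLike.ofReal_prod, ← RCLike.ofReal_sum, RCLike.ofReal_re, RCLike.ofReal_re,
    Real.log_prod fun i _ => (hpos i).ne', Fintype.card_eq_sum_ones, Nat.cast_sum,
    Nat.cast_one, ← Finset.sum_sub_distrib]
  exact Finset.sum_le_sum fun i _ => Real.log_le_sub_one_of_pos (hpos i)

lemma two_mul_log_norm_det_le_frobNormSq_sub_card {n : Type*} [Fintype n] [DecidableEq n]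
    {M : Matrix n n ℂ} (hM : M.det ≠ 0) :
    2 * Real.log ‖M.det‖ ≤ frobNormSq M - Fintype.card n := by
  have hdet : (Mᴴ * M).det = ((‖M.det‖ ^ 2 : ℝ) : ℂ) := by
    rw [det_mul, det_conjTranspose, RCLike.star_def, Complex.conj_mul']
    push_cast; rfl
  have hlog :=
    (PosDef.conjTranspose_mul_self M (mulVec_injective_of_det_ne_zero hM)).log_det_le_trace_sub_card
  rw [hdet, trace_conjTranspose_mul_self_eq_frobNormSq] at hlog
  simpa only [RCLike.re_to_complex, Complex.ofReal_re, Real.log_pow, Nat.cast_ofNat] using hlog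

end Matrix

lemma frobSq_eq_frobNormSq {m : ℕ} (B : Matrix (Fin m) (Fin m) ℂ) : frobSq B = frobNormSq B :=
  rfl

lemma frobNormSq_Ftilde (m : ℕ) (z₀ b : ℂ) (lam : Fin m → ℝ)
    (B20 B02 : Matrix (Fin m) (Fin m) ℂ) :
    frobNormSq (Ftilde m z₀ b lam B20 B02)
      = 4 * ∑ j, lam j ^ 2 + 4 * m * ‖z₀‖ ^ 2
        + 2 * ‖b‖ ^ 2 * (frobSq B20 + frobSq B02) := by
  simp only [Ftilde, frobNormSq_fromBlocks, frobNormSq_smul, frobNormSq_neg,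
    frobNormSq_conjTranspose, frobNormSq_zero, frobNormSq_one, frobNormSq_diagonal,
    Complex.norm_real, Real.norm_eq_abs, sq_abs, Complex.norm_conj, Fintype.card_fin]
  rw [frobSq_eq_frobNormSq, frobSq_eq_frobNormSq]
  ring

theorem phi_upper_bound_general (m : ℕ) (z₀ b : ℂ) (hb : ‖b‖ ≤ 1)
    (lam : Fin m → ℝ)
    (B20 B02 : Matrix (Fin m) (Fin m) ℂ)
    (t : ℝ) (ht : 0 ≤ t) :
    PhiFn m z₀ b lam B20 B02 t ≤ (((m : ℝ) * (‖z₀‖ ^ 2 - 1) : ℝ) : EReal) := by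
  rw [PhiFn]
  split_ifs with hdet
  · exact bot_le
  rw [EReal.coe_le_coe_iff]
  have hlog := two_mul_log_norm_det_le_frobNormSq_sub_card hdet
  rw [frobNormSq_Ftilde] at hlog
  have hcard : (Fintype.card ((Fin m ⊕ Fin m) ⊕ (Fin m ⊕ Fin m)) : ℝ) = 4 * m := by
    simp only [Fintype.card_sum, Fintype.card_fin]; push_cast; ring
  have hb2 : ‖b‖ ^ 2 ≤ 1 := pow_le_one₀ (norm_nonneg b) hb
  have hB : 0 ≤ frobSq B20 + frobSq B02 := by
    rw [frobSq_eq_frobNormSq, frobSq_eq_frobNormSq]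
    exact add_nonneg (frobNormSq_nonneg B20) (frobNormSq_nonneg B02)
  linarith [mul_nonneg (sub_nonneg.mpr hb2) hB]

/-- Let `m ≥ 1`, `z₀ ∈ ℂ` arbitrary and `b ∈ ℂ` with `|b| ≤ 1`.  Then for
all `λ_j ≥ 0`, skew-symmetric `B₂₀, B₀₂` and `t ≥ 0` one has `Φ(Λ,B₂₀,B₀₂,t) ≤ m(|z₀|² - 1)`. -/
theorem phi_upper_bound (m : ℕ) (hm : 1 ≤ m) (z₀ b : ℂ) (hb : ‖b‖ ≤ 1)
    (lam : Fin m → ℝ) (hlam : ∀ j, 0 ≤ lam j)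
    (B20 B02 : Matrix (Fin m) (Fin m) ℂ)
    (hB20 : B20ᵀ = -B20) (hB02 : B02ᵀ = -B02)
    (t : ℝ) (ht : 0 ≤ t) :
    PhiFn m z₀ b lam B20 B02 t ≤ (((m : ℝ) * (‖z₀‖ ^ 2 - 1) : ℝ) : EReal) :=
  phi_upper_bound_general m z₀ b hb lam B20 B02 t ht
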